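/- arXiv:0711.3799 — 2 statements merged into one kernel-verified Lean document; each statement's English description precedes it below -/
import Mathlib

section
/- Let L be a Lie algebra over a field k of characteristic 0, V a k-vector space viewed as a trivial L-module, and P ∈ Z²(L,V) a 2-cocycle, giving the central extension L_P = L ⊕ V with bracket [x+u, y+v]_P = [x,y] + P(x,y). An automorphism θ of L lifts to an automorphism θ_P of L_P (i.e. there exists θ_P ∈ Aut_k(L_P) with π ∘ θ_P = θ ∘ π, where π : L_P → L is the projection) if and only if there exist γ ∈ Hom_k(L,V) and μ ∈ GL_k(V) such that μ ∘ P − P ∘ (θ × θ) = δ(γ), where δ(γ)(x,y) = −γ([x,y]). -/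
/-!
A linear automorphism `Φ` of `L × V` lying over `θ` maps `0 × V` onto itself, so it has the
shape `(x, v) ↦ (θ x, γ x + μ v)` with `γ : L → V` linear and `μ ∈ GL(V)`. Comparing the
`V`-components of `Φ [x, y]_P` and `[Φ x, Φ y]_P` shows that such a map respects the bracket of
`L_P` exactly when `μ ∘ P + γ ∘ [·,·] = P ∘ (θ × θ)`.
-/

namespace LinearEquiv

variable {R M M₂ N N₂ : Type*} [CommRing R] [AddCommGroup M] [Module R M] [AddCommGroup M₂]
  [Module R M₂] [AddCommGroup N] [Module R N] [AddCommGroup N₂] [Module R N₂]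

theorem fst_apply_zero_mk_of_fst_eq {Φ : (M × N) ≃ₗ[R] (M₂ × N₂)} {θ : M ≃ₗ[R] M₂}
    (hΦ : ∀ a, (Φ a).1 = θ a.1) (v : N) : (Φ (0, v)).1 = 0 := by
  simpa using hΦ (0, v)

theorem bijective_snd_comp_inr_of_fst_eq {Φ : (M × N) ≃ₗ[R] (M₂ × N₂)} {θ : M ≃ₗ[R] M₂}
    (hΦ : ∀ a, (Φ a).1 = θ a.1) :
    Function.Bijective (LinearMap.snd R M₂ N₂ ∘ₗ Φ.toLinearMap ∘ₗ LinearMap.inr R M N) := by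
  refine ⟨fun u v huv ↦ ?_, fun w ↦ ?_⟩
  · have : Φ (0, u) = Φ (0, v) := Prod.ext
      (by rw [fst_apply_zero_mk_of_fst_eq hΦ, fst_apply_zero_mk_of_fst_eq hΦ]) (by simpa using huv)
    simpa using Φ.injective this
  · obtain ⟨⟨x, v⟩, hxv⟩ := Φ.surjective (0, w)
    have hx : x = 0 := θ.injective (by simpa [hxv] using (hΦ (x, v)).symm)
    subst hx
    exact ⟨v, by simp [hxv]⟩

theorem exists_eq_skewProd_of_fst_eq {Φ : (M × N) ≃ₗ[R] (M₂ × N₂)} {θ : M ≃ₗ[R] M₂}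
    (hΦ : ∀ a, (Φ a).1 = θ a.1) :
    ∃ (γ : M →ₗ[R] N₂) (μ : N ≃ₗ[R] N₂), Φ = θ.skewProd μ γ := by
  refine ⟨LinearMap.snd R M₂ N₂ ∘ₗ Φ.toLinearMap ∘ₗ LinearMap.inl R M N,
    ofBijective _ (bijective_snd_comp_inr_of_fst_eq hΦ), ?_⟩
  ext ⟨x, v⟩
  · simp [hΦ]
  · have hsplit : ((x, v) : M × N) = (x, 0) + (0, v) := by simp
    rw [hsplit, map_add]
    simp [add_comm]

end LinearEquiv

section CentralExtension

variable {R L V : Type*} [CommRing R] [LieRing L] [LieAlgebra R L] [AddCommGroup V] [Module R V]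

theorem skewProd_map_bracket_iff (P : L →ₗ[R] L →ₗ[R] V) (θ : L ≃ₗ⁅R⁆ L) (γ : L →ₗ[R] V)
    (μ : V ≃ₗ[R] V) :
    (∀ a b : L × V, θ.toLinearEquiv.skewProd μ γ (⁅a.1, b.1⁆, P a.1 b.1)
        = (⁅(θ.toLinearEquiv.skewProd μ γ a).1, (θ.toLinearEquiv.skewProd μ γ b).1⁆,
          P (θ.toLinearEquiv.skewProd μ γ a).1 (θ.toLinearEquiv.skewProd μ γ b).1)) ↔
      ∀ x y : L, μ (P x y) - P (θ x) (θ y) = -γ ⁅x, y⁆ := by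
  simp only [LinearEquiv.skewProd_apply, LieEquiv.coe_toLinearEquiv, LieEquiv.map_lie,
    Prod.mk.injEq, true_and, Prod.forall]
  constructor
  · intro h x y
    linear_combination (norm := module) h x 0 y 0
  · intro h x _ y _
    linear_combination (norm := module) h x y

end CentralExtension

theorem statement0_general (k : Type*) [Field k]
    (L : Type*) [LieRing L] [LieAlgebra k L]
    (V : Type*) [AddCommGroup V] [Module k V]
    (P : L →ₗ[k] L →ₗ[k] V)
    (θ : L ≃ₗ⁅k⁆ L) :
    (∃ θP : (L × V) ≃ₗ[k] (L × V),
      (∀ a b : L × V, θP (⁅a.1, b.1⁆, P a.1 b.1)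
        = (⁅(θP a).1, (θP b).1⁆, P (θP a).1 (θP b).1)) ∧
      (∀ a : L × V, (θP a).1 = θ a.1)) ↔
    (∃ (γ : L →ₗ[k] V) (μ : V ≃ₗ[k] V),
      ∀ x y : L, μ (P x y) - P (θ x) (θ y) = -γ ⁅x, y⁆) := by
  constructor
  · rintro ⟨θP, hbracket, hfst⟩
    obtain ⟨γ, μ, rfl⟩ := LinearEquiv.exists_eq_skewProd_of_fst_eq (θ := θ.toLinearEquiv) hfst
    exact ⟨γ, μ, (skewProd_map_bracket_iff P θ γ μ).1 hbracket⟩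
  · rintro ⟨γ, μ, h⟩
    exact ⟨θ.toLinearEquiv.skewProd μ γ, (skewProd_map_bracket_iff P θ γ μ).2 h, fun _ ↦ rfl⟩

/-- An automorphism θ of L lifts to the central extension
`L_P = L ⊕ V` (with bracket `[x+u,y+v]_P = [x,y] + P x y`) iff there exist
`γ ∈ Hom_k(L,V)` and `μ ∈ GL_k(V)` with `μ ∘ P − P ∘ (θ × θ) = δ(γ)`. -/
theorem statement0 (k : Type*) [Field k] [CharZero k]
    (L : Type*) [LieRing L] [LieAlgebra k L]
    (V : Type*) [AddCommGroup V] [Module k V]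
    (P : L →ₗ[k] L →ₗ[k] V)
    (hP_alt : ∀ x : L, P x x = 0)
    (hP_cocycle : ∀ x y z : L, P ⁅x, y⁆ z + P ⁅y, z⁆ x + P ⁅z, x⁆ y = 0)
    (θ : L ≃ₗ⁅k⁆ L) :
    (∃ θP : (L × V) ≃ₗ[k] (L × V),
      (∀ a b : L × V, θP (⁅a.1, b.1⁆, P a.1 b.1)
        = (⁅(θP a).1, (θP b).1⁆, P (θP a).1 (θP b).1)) ∧
      (∀ a : L × V, (θP a).1 = θ a.1)) ↔
    (∃ (γ : L →ₗ[k] V) (μ : V ≃ₗ[k] V),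
      ∀ x y : L, μ (P x y) - P (θ x) (θ y) = -γ ⁅x, y⁆) :=
  statement0_general k L V P θ
end

section
/- Let g be a finite dimensional split simple Lie algebra over a field k of characteristic 0 and R a commutative associative unital k-algebra. The map P̂ : (g ⊗ R) × (g ⊗ R) → Ω_{R/k}/dR determined by P̂(x⊗a, y⊗b) = (x|y)·(a db mod dR), where (·|·) is the Killing form of g, is a Lie algebra 2-cocycle on the k-Lie algebra g ⊗ R with values in the trivial module Ω_{R/k}/dR. -/
set_option maxHeartbeats 1000000
set_option synthInstance.maxHeartbeats 400000

open scoped TensorProduct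

/-- The subspace `dR ⊆ Ω_{R/k}` of exact differentials, as a `k`-submodule. -/
noncomputable def exactDifferentials (k R : Type*) [Field k] [CommRing R]
    [Algebra k R] : Submodule k (Ω[R⁄k]) :=
  LinearMap.range ((KaehlerDifferential.D k R : R →ₗ[k] Ω[R⁄k]))

lemma mkQ_D_eq_zero (k R : Type*) [Field k] [CommRing R] [Algebra k R] (a : R) :
    (exactDifferentials k R).mkQ (KaehlerDifferential.D k R a) = 0 := by
  rw [Submodule.mkQ_apply, Submodule.Quotient.mk_eq_zero]
  exact ⟨a, rfl⟩

/-- For `𝔤` a finite dimensional split simple Lie algebra over a field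
`k` of characteristic 0 and `R` a commutative associative unital `k`-algebra, the map
`P̂` determined by `P̂(x⊗a, y⊗b) = (x|y)·(a db mod dR)` (Killing form `(·|·)`) is a
Lie algebra 2-cocycle on `𝔤 ⊗ R` with values in `Ω_{R/k}/dR`. -/
theorem statement4 (k : Type*) [Field k] [CharZero k]
    (𝔤 : Type*) [LieRing 𝔤] [LieAlgebra k 𝔤] [FiniteDimensional k 𝔤]
    [LieAlgebra.IsSimple k 𝔤]
    (hsplit : ∃ H : LieSubalgebra k 𝔤, H.IsCartanSubalgebra ∧
      LieModule.IsTriangularizable k H 𝔤)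
    (R : Type*) [CommRing R] [Algebra k R]
    (P : (R ⊗[k] 𝔤) →ₗ[k] (R ⊗[k] 𝔤) →ₗ[k]
      (Ω[R⁄k] ⧸ exactDifferentials k R))
    (hP : ∀ (a b : R) (x y : 𝔤),
      P (a ⊗ₜ x) (b ⊗ₜ y) = killingForm k 𝔤 x y •
        (exactDifferentials k R).mkQ (a • KaehlerDifferential.D k R b)) :
    (∀ u : R ⊗[k] 𝔤, P u u = 0) ∧
    (∀ u v w : R ⊗[k] 𝔤, P ⁅u, v⁆ w + P ⁅v, w⁆ u + P ⁅w, u⁆ v = 0) := by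
  have D := KaehlerDifferential.D k R
  -- symmetry
  have hsym : ∀ u v : R ⊗[k] 𝔤, P u v + P v u = 0 := by
    intro u v
    induction u using TensorProduct.induction_on with
    | zero => simp
    | add u u' hu hu' =>
      have h := congrArg₂ (· + ·) hu hu'
      simp only [add_zero] at h
      simp only [map_add, LinearMap.add_apply]
      rw [← h]; abel
    | tmul a x =>
      induction v using TensorProduct.induction_on with
      | zero => simp
      | add v v' hv hv' =>
        have h := congrArg₂ (· + ·) hv hv'
        simp only [add_zero] at h
        simp only [map_add, LinearMap.add_apply]
        rw [← h]; abel
      | tmul b y =>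
        rw [hP, hP]
        have hk : killingForm k 𝔤 y x = killingForm k 𝔤 x y :=
          LieModule.traceForm_comm k 𝔤 𝔤 y x
        rw [hk, ← smul_add, ← map_add]
        have hab : a • KaehlerDifferential.D k R b + b • KaehlerDifferential.D k R a =
            KaehlerDifferential.D k R (a * b) :=
          (Derivation.leibniz (KaehlerDifferential.D k R) a b).symm
        rw [hab, mkQ_D_eq_zero, smul_zero]
  constructor
  · intro u
    have h := hsym u u
    have h2 : (2 : k) • P u u = 0 := by rw [two_smul]; exact h
    rcases smul_eq_zero.mp h2 with h' | h'
    · exact absurd h' two_ne_zero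
    · exact h'
  · intro u v w
    induction u using TensorProduct.induction_on with
    | zero => simp
    | add u u' hu hu' =>
      have h := congrArg₂ (· + ·) hu hu'
      simp only [add_zero] at h
      simp only [add_lie, lie_add, map_add, LinearMap.add_apply]
      rw [← h]; abel
    | tmul a x =>
      induction v using TensorProduct.induction_on with
      | zero => simp
      | add v v' hv hv' =>
        have h := congrArg₂ (· + ·) hv hv'
        simp only [add_zero] at h
        simp only [add_lie, lie_add, map_add, LinearMap.add_apply]
        rw [← h]; abel
      | tmul b y =>
        induction w using TensorProduct.induction_on with
        | zero => simp
        | add w w' hw hw' =>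
          have h := congrArg₂ (· + ·) hw hw'
          simp only [add_zero] at h
          simp only [add_lie, lie_add, map_add, LinearMap.add_apply]
          rw [← h]; abel
        | tmul c z =>
          rw [LieAlgebra.ExtendScalars.bracket_tmul, LieAlgebra.ExtendScalars.bracket_tmul,
            LieAlgebra.ExtendScalars.bracket_tmul, hP, hP, hP]
          have h1 : killingForm k 𝔤 ⁅y, z⁆ x = killingForm k 𝔤 ⁅x, y⁆ z := by
            rw [LieModule.traceForm_comm k 𝔤 𝔤 ⁅y, z⁆ x]
            exact (LieModule.traceForm_apply_lie_apply k 𝔤 𝔤 x y z).symm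
          have h2 : killingForm k 𝔤 ⁅z, x⁆ y = killingForm k 𝔤 ⁅x, y⁆ z := by
            rw [LieModule.traceForm_comm k 𝔤 𝔤 ⁅z, x⁆ y]
            calc killingForm k 𝔤 y ⁅z, x⁆ = killingForm k 𝔤 ⁅y, z⁆ x :=
              (LieModule.traceForm_apply_lie_apply k 𝔤 𝔤 y z x).symm
            _ = killingForm k 𝔤 ⁅x, y⁆ z := h1
          rw [h1, h2, ← smul_add, ← smul_add, ← map_add, ← map_add]
          have hd : (a * b) • KaehlerDifferential.D k R c +
              (b * c) • KaehlerDifferential.D k R a +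
              (c * a) • KaehlerDifferential.D k R b =
              KaehlerDifferential.D k R (a * b * c) := by
            rw [Derivation.leibniz, Derivation.leibniz, smul_add, smul_smul,
              smul_smul, mul_comm c a, mul_comm c b]
            abel
          rw [hd, mkQ_D_eq_zero, smul_zero]
end
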